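/- If K₁, ..., Kₙ is a finite family of pairwise disjoint convex bodies in ℝ^d (d ≥ 2), then the intersection ⋂ᵢ (complement of int Kᵢ) is orthogonally connected. -/

import Mathlib

open Set MeasureTheory Bornology
open scoped ENNReal

noncomputable section

/-- `ℝ^d` as Euclidean space. -/
abbrev EucR (d : ℕ) := EuclideanSpace ℝ (Fin d)

/-- The segment from `x` to `y` is parallel to a coordinate axis
(all coordinates except possibly one agree). -/
def IsOrthSeg {d : ℕ} (x y : EucR d) : Prop :=
  ∃ i : Fin d, ∀ j, j ≠ i → x j = y j

/-- `p 0, p 1, …, p n` is an orthogonal polygonal path contained in `S`. -/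
def IsOrthPathIn {d : ℕ} (S : Set (EucR d)) (p : ℕ → EucR d) (n : ℕ) : Prop :=
  ∀ k, k < n → IsOrthSeg (p k) (p (k + 1)) ∧ segment ℝ (p k) (p (k + 1)) ⊆ S

/-- `S` is orthogonally connected. -/
def OrthConnected {d : ℕ} (S : Set (EucR d)) : Prop :=
  ∀ x ∈ S, ∀ y ∈ S, ∃ n : ℕ, ∃ p : ℕ → EucR d,
    p 0 = x ∧ p n = y ∧ IsOrthPathIn S p n

/-- An orthogonal path is a staircase if all edges parallel to the same axis
point in the same direction. -/
def IsStaircaseIn {d : ℕ} (S : Set (EucR d)) (p : ℕ → EucR d) (n : ℕ) : Prop :=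
  IsOrthPathIn S p n ∧
    ∀ k, k < n → ∀ l, l < n → ∀ i : Fin d,
      (∀ j, j ≠ i → p k j = p (k + 1) j) → (∀ j, j ≠ i → p l j = p (l + 1) j) →
        0 ≤ (p (k + 1) i - p k i) * (p (l + 1) i - p l i)

/-- `S` is staircase connected. -/
def StaircaseConnected {d : ℕ} (S : Set (EucR d)) : Prop :=
  ∀ x ∈ S, ∀ y ∈ S, ∃ n : ℕ, ∃ p : ℕ → EucR d,
    p 0 = x ∧ p n = y ∧ IsStaircaseIn S p n

/-- `S` is orthogonally convex. -/
def OrthConvex {d : ℕ} (S : Set (EucR d)) : Prop :=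
  ∀ x ∈ S, ∀ y ∈ S, IsOrthSeg x y → segment ℝ x y ⊆ S

/-- A convex body: compact convex with nonempty interior. -/
def IsConvexBody {d : ℕ} (K : Set (EucR d)) : Prop :=
  Convex ℝ K ∧ IsCompact K ∧ (interior K).Nonempty

/-- The point of `ℝ²` with coordinates `(a, b)`. -/
def pt2 (a b : ℝ) : EucR 2 := (WithLp.equiv 2 (Fin 2 → ℝ)).symm ![a, b]

/-- Horizontal width of `S` at `x`: the length of the connected component
containing `x` of the intersection of `S` with the horizontal line through `x`. -/
def hw (S : Set (EucR 2)) (x : EucR 2) : ℝ≥0∞ :=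
  volume (connectedComponentIn {t : ℝ | pt2 t (x 1) ∈ S} (x 0))

/-- Vertical width of `S` at `x`. -/
def vw (S : Set (EucR 2)) (x : EucR 2) : ℝ≥0∞ :=
  volume (connectedComponentIn {t : ℝ | pt2 (x 0) t ∈ S} (x 1))

/-- The set of unit directions from `x` towards points of `K`. -/
def dirSet (x : EucR 2) (K : Set (EucR 2)) : Set (EucR 2) :=
  {u | ∃ y ∈ K, y ≠ x ∧ u = ‖y - x‖⁻¹ • (y - x)}

/-- `α_x(K)`: the angular (1-dimensional Hausdorff) measure of the set of unit
directions from `x` towards other points of `K`. -/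
def angMeasure (x : EucR 2) (K : Set (EucR 2)) : ℝ≥0∞ :=
  μH[1] (dirSet x K)

/-- The half-line from `x` through `y`. -/
def rayFrom (x y : EucR 2) : Set (EucR 2) := {z | ∃ t : ℝ, 0 ≤ t ∧ z = x + t • (y - x)}

/-- `T_x(K)`: the union of the half-lines from `x` through the points of `K \ {x}`. -/
def TCone (x : EucR 2) (K : Set (EucR 2)) : Set (EucR 2) := ⋃ y ∈ K \ {x}, rayFrom x y

/-- `K` is obtuse: at every boundary point `x`, either `α_x(K) > π/2`, or
`α_x(K) = π/2` and `T_x(K) \ {x}` is not open. -/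
def Obtuse (K : Set (EucR 2)) : Prop :=
  ∀ x ∈ frontier K,
    ENNReal.ofReal (Real.pi / 2) < angMeasure x K ∨
      (angMeasure x K = ENNReal.ofReal (Real.pi / 2) ∧ ¬ IsOpen (TCone x K \ {x}))

/-- Inclusion of `ℝ² × ℝ` into `ℝ³`. -/
def incl3 (q : EucR 2) (t : ℝ) : EucR 3 := (WithLp.equiv 2 (Fin 3 → ℝ)).symm ![q 0, q 1, t]

/-- A piece of a continuum `C`: the closure of a connected component of
`C \ {x}` for some cut point `x` of `C`. -/
def IsPiece (C P : Set (EucR 2)) : Prop :=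
  ∃ x ∈ C, ¬ IsPreconnected (C \ {x}) ∧
    ∃ y ∈ C \ {x}, P = closure (connectedComponentIn (C \ {x}) y)

/-- `f` is unimodal on `[a,b]`: non-decreasing on `[a,c]`, non-increasing on `[c,b]`
for some `c ∈ (a,b)`. -/
def Unimodal (f : ℝ → ℝ) (a b : ℝ) : Prop :=
  ∃ c ∈ Ioo a b, MonotoneOn f (Icc a c) ∧ AntitoneOn f (Icc c b)

/-- `a` is an s-extreme point of `M`: it belongs to a staircase in `M` only as an
endpoint. -/
def SExtreme (M : Set (EucR 2)) (a : EucR 2) : Prop :=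
  a ∈ M ∧ ∀ n : ℕ, ∀ γ : ℕ → EucR 2, IsStaircaseIn M γ n →
    a ∈ ⋃ k ∈ Set.Iio n, segment ℝ (γ k) (γ (k + 1)) → a = γ 0 ∨ a = γ n

/-- `M ⊆ ℝ²` is a strip: the preimage of an interval of `ℝ` under a nonzero
linear functional (this includes half-planes and the whole plane). -/
def IsStrip (M : Set (EucR 2)) : Prop :=
  ∃ f : EucR 2 →ₗ[ℝ] ℝ, f ≠ 0 ∧ ∃ I : Set ℝ, I.OrdConnected ∧ M = f ⁻¹' I

end

/-!
The complement `W` of the union of the bodies is open, and for `d ≥ 2` it is path-connected. From a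
point of `W` walk in a fixed direction `e`: either the ray escapes beyond all bodies, or just before
it first meets a body `K i` it enters the thin shell `thickening δ (K i) \ K i`. The shell is
path-connected, since radial projection from an interior point maps the punctured space onto a
level set of the gauge lying inside it, so one can walk around `K i` inside the shell to a point
higher (in direction `e`) than all of `K i`. Among the shells reachable from a point take the one
with the highest such point; walking on from there can meet no further shell, so the ray escapes.

An open connected set is orthogonally connected, since nearby points are joined by staircases
inside small balls. Finally, a point `x ∈ K i \ interior (K i)` has, by convexity, a ray parallel to
the first axis that avoids `interior (K i)`; it runs inside `K i` up to some point and then leaves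
`K i` through its shell, which lies in `W`.
-/

open Set Metric Topology Pointwise

section OrthogonalPaths

variable {d : ℕ}

def OrthJoinedIn (S : Set (EucR d)) (x y : EucR d) : Prop :=
  ∃ n : ℕ, ∃ p : ℕ → EucR d, p 0 = x ∧ p n = y ∧ IsOrthPathIn S p n

theorem IsOrthSeg.symm {x y : EucR d} (h : IsOrthSeg x y) : IsOrthSeg y x :=
  let ⟨i, hi⟩ := h
  ⟨i, fun j hj => (hi j hj).symm⟩

theorem isOrthSeg_add_smul_single (x : EucR d) (i : Fin d) (a t : ℝ) :
    IsOrthSeg x (x + t • EuclideanSpace.single i a) :=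
  ⟨i, fun j hj => by simp [hj]⟩

namespace OrthJoinedIn

variable {S T : Set (EucR d)} {x y z : EucR d}

theorem of_segment (h : IsOrthSeg x y) (hS : segment ℝ x y ⊆ S) : OrthJoinedIn S x y :=
  ⟨1, fun k => if k = 0 then x else y, rfl, rfl, fun k hk => by
    obtain rfl : k = 0 := by omega
    exact ⟨h, hS⟩⟩

theorem mono (h : OrthJoinedIn S x y) (hST : S ⊆ T) : OrthJoinedIn T x y :=
  let ⟨n, p, h0, hn, hp⟩ := h
  ⟨n, p, h0, hn, fun k hk => ⟨(hp k hk).1, (hp k hk).2.trans hST⟩⟩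

theorem symm (h : OrthJoinedIn S x y) : OrthJoinedIn S y x := by
  obtain ⟨n, p, rfl, rfl, hp⟩ := h
  refine ⟨n, fun k => p (n - k), by simp, by simp, fun k hk => ?_⟩
  obtain ⟨hseg, hsub⟩ := hp (n - (k + 1)) (by omega)
  rw [show n - (k + 1) + 1 = n - k by omega] at hseg hsub
  exact ⟨hseg.symm, segment_symm ℝ (p (n - k)) _ ▸ hsub⟩

theorem trans (hxy : OrthJoinedIn S x y) (hyz : OrthJoinedIn S y z) : OrthJoinedIn S x z := by
  obtain ⟨m, p, rfl, rfl, hp⟩ := hxy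
  obtain ⟨n, q, hq0, rfl, hq⟩ := hyz
  set r : ℕ → EucR d := fun k => if k ≤ m then p k else q (k - m)
  have hr : ∀ k, m ≤ k → r k = q (k - m) := by
    intro k hk
    rcases hk.eq_or_lt with rfl | hlt
    · simp [r, hq0]
    · simp [r, hlt.not_ge]
  refine ⟨m + n, r, by simp [r], by rw [hr _ (by omega), Nat.add_sub_cancel_left], fun k hk => ?_⟩
  rcases lt_or_ge k m with hkm | hkm
  · simpa [r, hkm.le, Nat.succ_le_of_lt hkm] using hp k hkm
  · rw [hr k hkm, hr (k + 1) (by omega), show k + 1 - m = k - m + 1 by omega]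
    exact hq (k - m) (by omega)

end OrthJoinedIn

def stair (x y : EucR d) (k : ℕ) : EucR d :=
  WithLp.toLp 2 fun j => if (j : ℕ) < k then y j else x j

theorem continuous_stair (x : EucR d) (k : ℕ) : Continuous fun y => stair x y k :=
  (PiLp.continuous_toLp 2 _).comp <| continuous_pi fun j => by
    by_cases h : (j : ℕ) < k <;> simp only [h, if_true, if_false] <;> fun_prop

theorem isOrthSeg_stair (x y : EucR d) {k : ℕ} (hk : k < d) :
    IsOrthSeg (stair x y k) (stair x y (k + 1)) := by
  refine ⟨⟨k, hk⟩, fun j hj => ?_⟩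
  have : (j : ℕ) ≠ k := fun h => hj (Fin.ext h)
  by_cases h : (j : ℕ) < k <;> simp [stair, h] <;> omega

theorem eventually_orthJoinedIn {V : Set (EucR d)} (hV : IsOpen V) {x : EucR d} (hx : x ∈ V) :
    ∀ᶠ y in 𝓝 x, OrthJoinedIn V x y := by
  obtain ⟨r, hr, hball⟩ := Metric.isOpen_iff.1 hV x hx
  have hnear : ∀ k ∈ Finset.range (d + 1), ∀ᶠ y in 𝓝 x, stair x y k ∈ ball x r := fun k _ =>
    (continuous_stair x k).continuousAt.eventually_mem <| isOpen_ball.mem_nhds <| by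
      simpa [stair] using (mem_ball_self hr : x ∈ ball x r)
  filter_upwards [(Filter.eventually_all_finset _).2 hnear] with y hy
  refine ⟨d, stair x y, by ext j; simp [stair], by ext j; simp [stair], fun k hk => ?_⟩
  refine ⟨isOrthSeg_stair x y hk, ((convex_ball x r).segment_subset ?_ ?_).trans hball⟩
  exacts [hy k (by simp; omega), hy (k + 1) (by simp; omega)]

theorem IsOpen.orthConnected {V : Set (EucR d)} (hV : IsOpen V) (hc : IsPreconnected V) :
    OrthConnected V := fun _ hx _ hy =>
  hc.induction₂ (OrthJoinedIn V)
    (fun _ hx => nhdsWithin_le_nhds (eventually_orthJoinedIn hV hx))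
    (fun _ _ _ _ _ _ h₁ h₂ => h₁.trans h₂) (fun _ _ _ _ h => h.symm) hx hy

end OrthogonalPaths

theorem segment_add_smul_subset {E : Type*} [AddCommGroup E] [Module ℝ E] {s : Set E} {x v : E}
    {T : ℝ} (hT : 0 ≤ T) (h : ∀ t ∈ Icc 0 T, x + t • v ∈ s) : segment ℝ x (x + T • v) ⊆ s := by
  rw [segment_eq_image']
  rintro _ ⟨θ, hθ, rfl⟩
  simp only [add_sub_cancel_left, smul_smul]
  exact h _ ⟨mul_nonneg hθ.1 hT, mul_le_of_le_one_left hT hθ.2⟩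

theorem exists_thickening_diff_subset_compl_iUnion {α ι : Type*} [MetricSpace α] [Finite ι]
    {K : ι → Set α} (hK : ∀ i, IsCompact (K i)) (hdisj : Pairwise (Function.onFun Disjoint K))
    (i : ι) : ∃ δ > 0, thickening δ (K i) \ K i ⊆ (⋃ j, K j)ᶜ := by
  have hrest : IsClosed (⋃ (j) (_ : j ≠ i), K j) :=
    isClosed_iUnion_of_finite fun j => isClosed_iUnion_of_finite fun _ => (hK j).isClosed
  have hsub : K i ⊆ (⋃ (j) (_ : j ≠ i), K j)ᶜ :=
    (disjoint_iUnion₂_right.2 fun j hj => hdisj hj.symm).subset_compl_right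
  obtain ⟨δ, hδ, hδsub⟩ := (hK i).exists_thickening_subset_open hrest.isOpen_compl hsub
  refine ⟨δ, hδ, fun w ⟨hwδ, hwi⟩ hwU => ?_⟩
  obtain ⟨j, hwj⟩ := mem_iUnion.1 hwU
  have hji : j ≠ i := fun h => hwi (h ▸ hwj)
  exact hδsub hwδ (mem_iUnion₂.2 ⟨j, hji, hwj⟩)

theorem thickening_vadd {E : Type*} [NormedAddCommGroup E] (c : E) (s : Set E) (δ : ℝ) :
    thickening δ (c +ᵥ s) = c +ᵥ thickening δ s := by
  ext w
  rw [mem_vadd_set_iff_neg_vadd_mem, mem_thickening_iff_infEDist_lt,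
    mem_thickening_iff_infEDist_lt, ← infEDist_vadd (-c), neg_vadd_vadd]

section NormedSpace

variable {E : Type*} [NormedAddCommGroup E] [NormedSpace ℝ E]

theorem eventually_add_smul_mem_thickening {K : Set E} {x v : E} {t₀ δ : ℝ} (hδ : 0 < δ)
    (h : x + t₀ • v ∈ K) : ∀ᶠ t in 𝓝 t₀, x + t • v ∈ thickening δ K :=
  (Continuous.continuousAt (by fun_prop)).eventually_mem <|
    isOpen_thickening.mem_nhds (self_subset_thickening hδ K h)

theorem Convex.exists_forall_add_smul_notMem_interior {K : Set E} (hK : Convex ℝ K) {x : E}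
    (hx : x ∉ interior K) (v : E) :
    ∃ c : ℝ, c ≠ 0 ∧ ∀ t : ℝ, 0 ≤ t → x + t • c • v ∉ interior K := by
  by_contra! h
  obtain ⟨a, ha, hxa⟩ := h 1 one_ne_zero
  obtain ⟨b, hb, hxb⟩ := h (-1) (by norm_num)
  rcases (add_nonneg ha hb).eq_or_lt with hab | hab
  · obtain rfl : a = 0 := by linarith
    exact hx (by simpa using hxa)
  refine hx (hK.interior.segment_subset hxa hxb ⟨b / (a + b), a / (a + b), by positivity,
    by positivity, by field_simp; ring, ?_⟩)
  match_scalars <;> field_simp <;> ring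

theorem Convex.exists_forall_add_smul_mem_iff_le {K : Set E} (hK : Convex ℝ K) (hKcl : IsClosed K)
    (hKb : Bornology.IsBounded K) {x u : E} (hx : x ∈ K) (hu : u ≠ 0) :
    ∃ s ≥ 0, ∀ t : ℝ, 0 ≤ t → (x + t • u ∈ K ↔ t ≤ s) := by
  set A := {t : ℝ | 0 ≤ t ∧ x + t • u ∈ K}
  have hA0 : (0 : ℝ) ∈ A := ⟨le_rfl, by simpa using hx⟩
  have hAcl : IsClosed A := isClosed_Ici.inter (hKcl.preimage (by fun_prop))
  have hAbdd : BddAbove A := by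
    obtain ⟨D, hD⟩ := (isBounded_iff_subset_closedBall x).1 hKb
    refine ⟨D / ‖u‖, fun t ht => (le_div_iff₀ (norm_pos_iff.2 hu)).2 ?_⟩
    simpa [dist_eq_norm, norm_smul, abs_of_nonneg ht.1] using hD ht.2
  have hsA : sSup A ∈ A := hAcl.csSup_mem ⟨0, hA0⟩ hAbdd
  refine ⟨sSup A, hsA.1, fun t ht => ⟨fun h => le_csSup hAbdd ⟨ht, h⟩, fun hts => ?_⟩⟩
  rcases hsA.1.eq_or_lt with hs0 | hspos
  · obtain rfl : t = 0 := by linarith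
    simpa using hx
  have := hK.add_smul_mem hx hsA.2 ⟨div_nonneg ht hspos.le, div_le_one_of_le₀ hts hspos.le⟩
  rwa [smul_smul, div_mul_cancel₀ _ hspos.ne'] at this

end NormedSpace

section Shell

variable {E : Type*} [NormedAddCommGroup E] [NormedSpace ℝ E] {K : Set E}

/-- The map is `w ↦ (s / gauge K w) • w`, the radial projection onto the level `s` of the gauge,
with `s > 1` so close to `1` that this level lies in the `δ`-shell of `K`. -/
theorem Convex.exists_radial_mapsTo_thickening_diff (hK : Convex ℝ K) (hKcl : IsClosed K)
    (hKb : Bornology.IsBounded K) (h0 : 0 ∈ interior K) {δ : ℝ} (hδ : 0 < δ) :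
    ∃ ρ : E → E, ContinuousOn ρ {0}ᶜ ∧ MapsTo ρ {0}ᶜ (Metric.thickening δ K \ K) ∧
      ∀ w ∉ K, segment ℝ w (ρ w) ⊆ Kᶜ := by
  have hK0 : K ∈ 𝓝 0 := mem_interior_iff_mem_nhds.1 h0
  have hpos : ∀ w ≠ 0, 0 < gauge K w := fun w hw =>
    (gauge_pos (absorbent_nhds_zero hK0) ((NormedSpace.isVonNBounded_iff ℝ).2 hKb)).2 hw
  have hmem : ∀ w, w ∈ K ↔ gauge K w ≤ 1 := fun w => by
    rw [gauge_le_one_iff_mem_closure hK hK0, hKcl.closure_eq]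
  obtain ⟨D, hD⟩ := (isBounded_iff_subset_closedBall 0).1 hKb
  have hD0 : 0 ≤ D := by simpa using hD (mem_of_mem_nhds hK0)
  set s := 1 + δ / (D + 1)
  have hs : 1 < s := by simp only [s]; linarith [div_pos hδ (by linarith : 0 < D + 1)]
  have hsD : (s - 1) * D < δ := by
    simp only [s, add_sub_cancel_left]
    rw [div_mul_eq_mul_div, div_lt_iff₀ (by linarith)]
    nlinarith
  refine ⟨fun w => (s / gauge K w) • w,
    (continuousOn_const.div (continuous_gauge hK hK0).continuousOn fun w hw =>
      (hpos w hw).ne').smul continuousOn_id, fun w hw => ?_, fun w hw => ?_⟩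
  · have hg := hpos w hw
    have hz : (gauge K w)⁻¹ • w ∈ K := by
      rw [hmem, gauge_smul_of_nonneg (inv_nonneg.2 hg.le), smul_eq_mul, inv_mul_cancel₀ hg.ne']
    refine ⟨mem_thickening_iff.2 ⟨_, hz, ?_⟩, fun h => ?_⟩
    · have hzD : ‖(gauge K w)⁻¹ • w‖ ≤ D := by simpa using hD hz
      calc dist ((s / gauge K w) • w) ((gauge K w)⁻¹ • w)
          = (s - 1) * ‖(gauge K w)⁻¹ • w‖ := by
            rw [dist_eq_norm, ← sub_smul, div_eq_mul_inv, ← sub_one_mul, ← smul_smul, norm_smul,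
              Real.norm_of_nonneg (by linarith)]
        _ ≤ (s - 1) * D := by gcongr
        _ < δ := hsD
    · rw [hmem, gauge_smul_of_nonneg (div_pos (by linarith) hg).le, smul_eq_mul,
        div_mul_cancel₀ _ hg.ne'] at h
      linarith
  · have hg : 1 < gauge K w := lt_of_not_ge fun h => hw ((hmem w).2 h)
    rw [segment_eq_image]
    rintro _ ⟨t, ht, rfl⟩ h
    have hcoef : 0 ≤ 1 - t + t * (s / gauge K w) := by
      have := mul_nonneg ht.1 (div_pos (by linarith) (by linarith) : 0 < s / gauge K w).le
      linarith [ht.2]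
    dsimp only at h
    rw [hmem, smul_smul, ← add_smul, gauge_smul_of_nonneg hcoef, smul_eq_mul, add_mul,
      mul_assoc, div_mul_cancel₀ _ (by linarith)] at h
    nlinarith [mul_nonneg (sub_nonneg.2 ht.2) (sub_nonneg.2 (min_le_left (gauge K w) s)),
      mul_nonneg ht.1 (sub_nonneg.2 (min_le_right (gauge K w) s)), lt_min hg hs]

theorem Convex.isPathConnected_thickening_diff_of_zero_mem_interior
    (hE : 1 < Module.rank ℝ E) (hK : Convex ℝ K) (hKcl : IsClosed K)
    (hKb : Bornology.IsBounded K) (h0 : 0 ∈ interior K) {δ : ℝ} (hδ : 0 < δ) :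
    IsPathConnected (Metric.thickening δ K \ K) := by
  obtain ⟨ρ, hρc, hρ, hρseg⟩ := hK.exists_radial_mapsTo_thickening_diff hKcl hKb h0 hδ
  have himage := (isPathConnected_compl_singleton_of_one_lt_rank hE 0).image' hρc
  obtain ⟨p, hp⟩ := himage.nonempty
  refine ⟨p, hρ.image_subset hp, fun {w} hw => ?_⟩
  have hw0 : w ≠ 0 := fun h => hw.2 (h ▸ interior_subset h0)
  have hwρ : JoinedIn (Metric.thickening δ K \ K) w (ρ w) := JoinedIn.of_segment_subset fun z hz =>
    ⟨(hK.thickening δ).segment_subset hw.1 (hρ hw0).1 hz, hρseg w hw.2 hz⟩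
  exact ((himage.joinedIn p hp _ (mem_image_of_mem ρ hw0)).mono hρ.image_subset).trans hwρ.symm

theorem Convex.isPathConnected_thickening_diff (hE : 1 < Module.rank ℝ E) (hK : Convex ℝ K)
    (hKcl : IsClosed K) (hKb : Bornology.IsBounded K) (hKi : (interior K).Nonempty) {δ : ℝ}
    (hδ : 0 < δ) : IsPathConnected (Metric.thickening δ K \ K) := by
  obtain ⟨c, hc⟩ := hKi
  have h0 : (0 : E) ∈ interior (-c +ᵥ K) := by
    rw [interior_vadd]
    exact ⟨c, hc, neg_add_cancel c⟩
  have hshell := (hK.vadd (-c)).isPathConnected_thickening_diff_of_zero_mem_interior hE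
    (hKcl.vadd _) (hKb.vadd _) h0 hδ
  have hK_eq : K = c +ᵥ (-c +ᵥ K) := (vadd_neg_vadd c K).symm
  rw [hK_eq, thickening_vadd, ← vadd_set_sdiff, ← image_vadd]
  exact hshell.image (continuous_const_vadd c)

end Shell

theorem compl_iUnion_subset_iInter_compl_interior {α ι : Type*} [TopologicalSpace α]
    {K : ι → Set α} : (⋃ i, K i)ᶜ ⊆ ⋂ i, (interior (K i))ᶜ := by
  rw [compl_iUnion]
  exact iInter_mono fun i => compl_subset_compl.2 interior_subset

section Complement

variable {E ι : Type*} [NormedAddCommGroup E] [NormedSpace ℝ E] [Finite ι] {K : ι → Set E}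

theorem IsCompact.exists_mem_thickening_diff_forall_lt {L : Set E} (hL : IsCompact L)
    (hne : L.Nonempty) {δ : ℝ} (hδ : 0 < δ) (ℓ : StrongDual ℝ E) {e : E} (he : 0 < ℓ e) :
    ∃ a ∈ thickening δ L \ L, ∀ z ∈ L, ℓ z < ℓ a := by
  obtain ⟨z₀, hz₀, hmax⟩ := hL.exists_isMaxOn hne ℓ.continuous.continuousOn
  obtain ⟨ε, hε, hnear⟩ := Metric.eventually_nhds_iff.1 <|
    eventually_add_smul_mem_thickening (x := z₀) (v := e) (t₀ := 0) hδ (by simpa using hz₀)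
  have hlt : ∀ z ∈ L, ℓ z < ℓ (z₀ + (ε / 2) • e) := fun z hz => by
    simp only [map_add, map_smul, smul_eq_mul]
    linarith [isMaxOn_iff.1 hmax z hz, mul_pos (half_pos hε) he]
  refine ⟨_, ⟨hnear ?_, fun h => (hlt _ h).false⟩, hlt⟩
  rw [Real.dist_eq, sub_zero, abs_of_pos (half_pos hε)]
  exact half_lt_self hε

theorem forall_add_smul_notMem_or_exists_joinedIn_thickening (hK : ∀ i, IsClosed (K i))
    {δ : ι → ℝ} (hδ : ∀ i, 0 < δ i) {w : E} (hw : w ∉ ⋃ i, K i) (v : E) :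
    (∀ t : ℝ, 0 ≤ t → w + t • v ∉ ⋃ i, K i) ∨
      ∃ i, ∃ t : ℝ, 0 < t ∧ w + t • v ∈ K i ∧
        ∃ b ∈ thickening (δ i) (K i), JoinedIn (⋃ i, K i)ᶜ w b := by
  by_cases hfree : ∀ t : ℝ, 0 ≤ t → w + t • v ∉ ⋃ i, K i
  · exact .inl hfree
  push Not at hfree
  set A := {t : ℝ | 0 ≤ t ∧ w + t • v ∈ ⋃ i, K i}
  have hAbdd : BddBelow A := ⟨0, fun _ ht => ht.1⟩
  have hAcl : IsClosed A :=
    isClosed_Ici.inter ((isClosed_iUnion_of_finite hK).preimage (by fun_prop))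
  have ht₀ : sInf A ∈ A := hAcl.csInf_mem hfree hAbdd
  have hbefore : ∀ t, 0 ≤ t → t < sInf A → w + t • v ∉ ⋃ i, K i := fun t ht hlt hmem =>
    (csInf_le hAbdd ⟨ht, hmem⟩).not_gt hlt
  have hpos : 0 < sInf A := ht₀.1.lt_of_ne fun h => hw (by simpa [← h] using ht₀.2)
  obtain ⟨i, hi⟩ := mem_iUnion.1 ht₀.2
  obtain ⟨ε, hε, hnear⟩ :=
    Metric.eventually_nhds_iff.1 (eventually_add_smul_mem_thickening (hδ i) hi)
  set t₁ := sInf A - min ε (sInf A) / 2 with ht₁_def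
  have ht₁ : 0 ≤ t₁ := by linarith [min_le_right ε (sInf A)]
  have ht₁lt : t₁ < sInf A := by linarith [lt_min hε hpos]
  refine .inr ⟨i, sInf A, hpos, hi, w + t₁ • v, hnear ?_, JoinedIn.of_segment_subset
    (segment_add_smul_subset ht₁ fun t ht => hbefore t ht.1 (ht.2.trans_lt ht₁lt))⟩
  rw [Real.dist_eq, abs_of_neg (by linarith)]
  linarith [min_le_left ε (sInf A), lt_min hε hpos]

theorem isPathConnected_compl_iUnion_of_convex (hE : 1 < Module.rank ℝ E)
    (hKc : ∀ i, Convex ℝ (K i)) (hKk : ∀ i, IsCompact (K i))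
    (hKi : ∀ i, (interior (K i)).Nonempty) (hdisj : Pairwise (Function.onFun Disjoint K)) :
    IsPathConnected (⋃ i, K i)ᶜ := by
  set W := (⋃ i, K i)ᶜ
  choose δ hδ hδW using exists_thickening_diff_subset_compl_iUnion hKk hdisj
  have hshell (i : ι) : IsPathConnected (thickening (δ i) (K i) \ K i) :=
    (hKc i).isPathConnected_thickening_diff hE (hKk i).isClosed (hKk i).isBounded (hKi i) (hδ i)
  have : Nontrivial E := rank_pos_iff_nontrivial.1 (zero_lt_one.trans hE)
  obtain ⟨e, he⟩ := exists_ne (0 : E)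
  obtain ⟨ℓ, hℓe⟩ := SeparatingDual.exists_eq_one (R := ℝ) he
  obtain ⟨R, hR⟩ := (isCompact_iUnion hKk).bddAbove_image ℓ.continuous.continuousOn
  set H := {p : E | R < ℓ p}
  have hHW : H ⊆ W := fun p hp hpU => (hR (mem_image_of_mem ℓ hpU)).not_gt hp
  have hH : IsPathConnected H :=
    (convex_halfSpace_gt ℓ.toLinearMap.isLinear R).isPathConnected ⟨(R + 1) • e, by simp [hℓe]⟩
  obtain ⟨p₀, hp₀⟩ := hH.nonempty
  choose a ha haK using fun i => (hKk i).exists_mem_thickening_diff_forall_lt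
    ((hKi i).mono interior_subset) (hδ i) ℓ (hℓe ▸ one_pos)
  have hwalk : ∀ w ∈ W, JoinedIn W w p₀ ∨ ∃ i, (∃ z ∈ K i, ℓ w ≤ ℓ z) ∧
      ∃ b ∈ thickening (δ i) (K i) \ K i, JoinedIn W w b := by
    intro w hw
    rcases forall_add_smul_notMem_or_exists_joinedIn_thickening (fun i => (hKk i).isClosed) hδ hw e
      with hfree | ⟨i, t, ht, hi, b, hb, hwb⟩
    · set T := max 0 (R - ℓ w) + 1
      have hT : 0 ≤ T := by positivity
      have hwH : w + T • e ∈ H := by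
        show R < ℓ (w + T • e)
        rw [map_add, map_smul, hℓe, smul_eq_mul, mul_one]
        linarith [le_max_right 0 (R - ℓ w)]
      exact .inl <| (JoinedIn.of_segment_subset (segment_add_smul_subset hT fun t ht =>
        hfree t ht.1)).trans ((hH.joinedIn _ hwH _ hp₀).mono hHW)
    · refine .inr ⟨i, ⟨_, hi, ?_⟩, b, ⟨hb, fun h => hwb.mem.2 (mem_iUnion_of_mem i h)⟩, hwb⟩
      simp only [map_add, map_smul, hℓe, smul_eq_mul, mul_one]
      linarith
  refine ⟨p₀, hHW hp₀, fun {w} hw => ?_⟩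
  by_contra hw₀
  set T := {i | ∃ b ∈ thickening (δ i) (K i) \ K i, JoinedIn W w b}
  have hT : T.Nonempty := by
    rcases hwalk w hw with h | ⟨i, -, hi⟩
    exacts [(hw₀ h.symm).elim, ⟨i, hi⟩]
  obtain ⟨i, ⟨b, hb, hwb⟩, himax⟩ := T.exists_max_image (fun i => ℓ (a i)) T.toFinite hT
  have hwa : JoinedIn W w (a i) := hwb.trans (((hshell i).joinedIn b hb _ (ha i)).mono (hδW i))
  rcases hwalk (a i) hwa.mem.2 with hap | ⟨j, ⟨z, hz, hle⟩, b', hb', hab'⟩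
  · exact hw₀ (hwa.trans hap).symm
  · exact (himax j ⟨b', hb', hwa.trans hab'⟩).not_gt (hle.trans_lt (haK j z hz))

theorem exists_add_smul_notMem_iUnion_segment_subset (hKc : ∀ i, Convex ℝ (K i))
    (hKk : ∀ i, IsCompact (K i)) (hdisj : Pairwise (Function.onFun Disjoint K)) {x : E}
    (hx : x ∈ ⋂ i, (interior (K i))ᶜ) {v : E} (hv : v ≠ 0) :
    ∃ t : ℝ, x + t • v ∉ ⋃ i, K i ∧ segment ℝ x (x + t • v) ⊆ ⋂ i, (interior (K i))ᶜ := by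
  by_cases hxU : x ∈ ⋃ i, K i
  swap
  · exact ⟨0, by simpa using hxU, by simpa using hx⟩
  obtain ⟨i, hxi⟩ := mem_iUnion.1 hxU
  obtain ⟨δ, hδ, hδW⟩ := exists_thickening_diff_subset_compl_iUnion hKk hdisj i
  obtain ⟨c, hc, hray⟩ := (hKc i).exists_forall_add_smul_notMem_interior (mem_iInter.1 hx i) v
  obtain ⟨s, hs, hsK⟩ := (hKc i).exists_forall_add_smul_mem_iff_le (hKk i).isClosed
    (hKk i).isBounded hxi (smul_ne_zero hc hv)
  obtain ⟨ε, hε, hnear⟩ := Metric.eventually_nhds_iff.1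
    (eventually_add_smul_mem_thickening hδ ((hsK s hs).2 le_rfl))
  have hout : ∀ t, s < t → t < s + ε → x + t • c • v ∈ (⋃ j, K j)ᶜ := fun t hst hts =>
    hδW ⟨hnear (by rw [Real.dist_eq, abs_lt]; constructor <;> linarith),
      fun h => ((hsK t (by linarith)).1 h).not_gt hst⟩
  refine ⟨(s + ε / 2) * c, ?_, ?_⟩ <;> rw [mul_smul]
  · exact hout _ (by linarith) (by linarith)
  refine segment_add_smul_subset (by linarith) fun t ht => ?_
  rcases le_or_gt t s with hts | hts
  · have htK : x + t • c • v ∈ K i := (hsK t ht.1).2 hts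
    refine mem_iInter.2 fun j hj => ?_
    rcases eq_or_ne j i with rfl | hji
    · exact hray t ht.1 hj
    · exact disjoint_left.1 (hdisj hji) (interior_subset hj) htK
  · exact compl_iUnion_subset_iInter_compl_interior (hout t hts (by linarith [ht.2]))

end Complement

/-- The intersection of the complements of the interiors of finitely many pairwise
disjoint convex bodies in `ℝ^d` (`d ≥ 2`) is orthogonally connected. -/
theorem orthConnected_iInter_compl_interior (d n : ℕ) (hd : 2 ≤ d)
    (K : Fin n → Set (EucR d)) (hK : ∀ i, IsConvexBody (K i))
    (hdisj : Pairwise (Function.onFun Disjoint K)) :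
    OrthConnected (⋂ i, (interior (K i))ᶜ) := by
  have hrank : 1 < Module.rank ℝ (EucR d) := by
    rw [← Module.finrank_eq_rank, finrank_euclideanSpace_fin]
    exact_mod_cast hd
  have hW : OrthConnected (⋃ i, K i)ᶜ :=
    (isClosed_iUnion_of_finite fun i => (hK i).2.1.isClosed).isOpen_compl.orthConnected
      (isPathConnected_compl_iUnion_of_convex hrank (fun i => (hK i).1) (fun i => (hK i).2.1)
        (fun i => (hK i).2.2) hdisj).isConnected.isPreconnected
  let i₀ : Fin d := ⟨0, by omega⟩
  have hexit : ∀ x ∈ ⋂ i, (interior (K i))ᶜ,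
      ∃ x' ∈ (⋃ i, K i)ᶜ, OrthJoinedIn (⋂ i, (interior (K i))ᶜ) x x' := by
    intro x hx
    obtain ⟨t, hxt, hseg⟩ := exists_add_smul_notMem_iUnion_segment_subset (fun i => (hK i).1)
      (fun i => (hK i).2.1) hdisj hx (by simp : EuclideanSpace.single i₀ (1 : ℝ) ≠ 0)
    exact ⟨_, hxt, .of_segment (isOrthSeg_add_smul_single x _ 1 t) hseg⟩
  intro x hx y hy
  obtain ⟨x', hx', hxx'⟩ := hexit x hx
  obtain ⟨y', hy', hyy'⟩ := hexit y hy
  exact hxx'.trans ((OrthJoinedIn.mono (hW x' hx' y' hy')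
    compl_iUnion_subset_iInter_compl_interior).trans hyy'.symm)
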